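/- For every ε > 0 there exists an integer D such that for every odd integer k ≥ 3 and every integer d ≥ D, setting n = (2d+1)k − 1, one has (1 − ε)·MMS(n,k) ≤ Q ≤ (1 + ε)·MMS(n,k). (That is, Q ∼ MMS(n,k) as n → ∞ with n ≡ k−1 (mod 2k), k = o(n) and k ≥ 3 odd; here MMS(n,k) = C(n,2d)/2.) -/

import Mathlib

/-- The Meagher–Moura–Stevens bound `MMS(n,k) = C(n,c) / (k - r + r(c+1)/(n-c))`,
where `c = n / k` and `r = n % k`. -/
noncomputable def MMS (n k : ℕ) : ℝ :=
  (n.choose (n / k) : ℝ) /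
    ((k : ℝ) - (n % k : ℕ) + (n % k : ℕ) * ((n / k : ℕ) + 1) / ((n : ℝ) - (n / k : ℕ)))


/-- `e_ℓ = C(n/2, d-ℓ)·C(n/2, d+ℓ)` (sizes of the classes of `2d`-sets). -/
def ee (n d ℓ : ℕ) : ℕ := (n / 2).choose (d - ℓ) * (n / 2).choose (d + ℓ)

/-- `e*_ℓ = C(n/2, d-ℓ)·C(n/2, d+1+ℓ)` (sizes of the classes of `(2d+1)`-sets). -/
def es (n d ℓ : ℕ) : ℕ := (n / 2).choose (d - ℓ) * (n / 2).choose (d + 1 + ℓ)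

/-- `a(x) = e_0 + 2·Σ_{ℓ=1}^{x} e_ℓ` for `x ∈ {0,…,d}`, with `a(-1) = 0`. -/
def aF (n d : ℕ) (x : ℤ) : ℤ :=
  if x < 0 then 0 else (ee n d 0 : ℤ) + 2 * ∑ ℓ ∈ Finset.Icc 1 x.toNat, (ee n d ℓ : ℤ)

/-- `b(x) = 2·Σ_{ℓ=x+1}^{d} e*_ℓ` for `x ∈ {0,…,d}`, with `b(-1) = C(n,2d+1)`. -/
def bF (n d : ℕ) (x : ℤ) : ℤ :=
  if x < 0 then (n.choose (2 * d + 1) : ℤ)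
  else 2 * ∑ ℓ ∈ Finset.Icc (x.toNat + 1) d, (es n d ℓ : ℤ)

/-! Write `m = n / 2 = (2d+1)K + d` and `c = k - 1 = 2K`. Pascal's rule gives
`e*_ℓ (d+ℓ+1) = e_ℓ (m-d-ℓ)` and `e*_ℓ (d-ℓ) = e_{ℓ+1} (m-d+ℓ+1)`, whence the sandwich
`c e_{ℓ+1} ≤ e*_ℓ ≤ c e_ℓ`. By Vandermonde `C(n,2d) = a(x) + 2 Σ_{ℓ>x} e_ℓ`, so the sandwich turns
`c a(u) ≤ b(u)` into `2 a(u) ≤ C(n,2d)`, and the failure of the inequality at `u + 1` into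
`C(n,2d) ≤ 2 a(u) + 6 e_0`. Finally `e_0 = o(C(n,2d))`: the ratio bound
`e_{ℓ+1} / e_ℓ ≥ 1 - 4(ℓ+1)/d` keeps `e_ℓ ≥ e_0 / 2` while `8ℓ² ≤ d`, so
`C(n,2d) ≥ 2 Σ_{1 ≤ ℓ ≤ N} e_ℓ ≥ N e_0` as soon as `d ≥ 8N²`. -/

open Finset

lemma sum_Icc_one_eq_sum_range {M : Type*} [AddCommMonoid M] (f : ℕ → M) (x : ℕ) :
    ∑ ℓ ∈ Icc 1 x, f ℓ = ∑ i ∈ range x, f (i + 1) := by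
  rw [← Ico_add_one_right_eq_Icc, range_eq_Ico, sum_Ico_add' f 0 x 1, zero_add]

section Binomial

variable {n d ℓ : ℕ}

lemma es_mul_add_one : es n d ℓ * (d + ℓ + 1) = ee n d ℓ * (n / 2 - (d + ℓ)) := by
  rw [es, ee, mul_assoc, add_right_comm, Nat.choose_succ_right_eq, mul_assoc]

lemma es_mul_sub (h : ℓ < d) :
    es n d ℓ * (d - ℓ) = ee n d (ℓ + 1) * (n / 2 - (d - (ℓ + 1))) := by
  have hsub : d - ℓ = d - (ℓ + 1) + 1 := by omega
  rw [es, ee, mul_right_comm, hsub, Nat.choose_succ_right_eq,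
    show d + 1 + ℓ = d + (ℓ + 1) by ring]
  ring

lemma ee_succ_mul (hd : d ≤ n / 2) (h : ℓ < d) :
    ee n d (ℓ + 1) * ((d + ℓ + 1) * (n / 2 - d + ℓ + 1)) =
      ee n d ℓ * ((d - ℓ) * (n / 2 - d - ℓ)) := by
  have h₁ := es_mul_add_one (n := n) (d := d) (ℓ := ℓ)
  have h₂ := es_mul_sub (n := n) h
  rw [show n / 2 - (d - (ℓ + 1)) = n / 2 - d + ℓ + 1 by omega] at h₂
  rw [Nat.sub_sub]
  calc ee n d (ℓ + 1) * ((d + ℓ + 1) * (n / 2 - d + ℓ + 1))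
      = es n d ℓ * (d + ℓ + 1) * (d - ℓ) := by rw [mul_right_comm, h₂]; ring
    _ = ee n d ℓ * ((d - ℓ) * (n / 2 - (d + ℓ))) := by rw [h₁]; ring

lemma ee_succ_le (hd : d ≤ n / 2) (h : ℓ < d) : ee n d (ℓ + 1) ≤ ee n d ℓ := by
  have key := ee_succ_mul hd h
  refine le_of_mul_le_mul_right (a := (d + ℓ + 1) * (n / 2 - d + ℓ + 1)) ?_
    (Nat.mul_pos (by omega) (by omega))
  rw [key]
  gcongr <;> omega

lemma ee_le_ee_zero (hd : d ≤ n / 2) (h : ℓ ≤ d) : ee n d ℓ ≤ ee n d 0 := by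
  induction ℓ with
  | zero => rfl
  | succ ℓ ih => exact (ee_succ_le hd h).trans (ih (by omega))

lemma mul_ee_le_mul_ee_succ_add (hd : 2 * d ≤ n / 2) (h : ℓ < d) :
    d * ee n d ℓ ≤ d * ee n d (ℓ + 1) + 4 * (ℓ + 1) * ee n d ℓ := by
  obtain ⟨P, hP⟩ : ∃ P, n / 2 = d + P := ⟨n / 2 - d, by omega⟩
  have key := ee_succ_mul (by omega : d ≤ n / 2) h
  rw [hP, show d + P - d + ℓ + 1 = P + ℓ + 1 by omega, show d + P - d - ℓ = P - ℓ by omega] at key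
  have hpos : 0 < (d + ℓ + 1) * (P + ℓ + 1) := by positivity
  have arith : d * ((d + ℓ + 1) * (P + ℓ + 1)) ≤
      d * ((d - ℓ) * (P - ℓ)) + 4 * (ℓ + 1) * ((d + ℓ + 1) * (P + ℓ + 1)) := by
    -- `(d+ℓ+1)(P+ℓ+1) - (d-ℓ)(P-ℓ) = (2ℓ+1)(P+d+1)`, and `d ≤ P`
    have hdP : d ≤ P := by omega
    zify [h.le, (by omega : ℓ ≤ P)] at hdP ⊢
    have hℓ : (0 : ℤ) ≤ ℓ := by positivity
    have hd0 : (0 : ℤ) ≤ d := by positivity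
    nlinarith [mul_nonneg (mul_nonneg hℓ hd0) (sub_nonneg.2 hdP),
      mul_nonneg (mul_nonneg hℓ hℓ) (hd0.trans hdP), mul_nonneg hd0 (sub_nonneg.2 hdP)]
  refine le_of_mul_le_mul_right (a := (d + ℓ + 1) * (P + ℓ + 1)) ?_ hpos
  calc d * ee n d ℓ * ((d + ℓ + 1) * (P + ℓ + 1))
      = ee n d ℓ * (d * ((d + ℓ + 1) * (P + ℓ + 1))) := by ring
    _ ≤ ee n d ℓ * (d * ((d - ℓ) * (P - ℓ)) + 4 * (ℓ + 1) * ((d + ℓ + 1) * (P + ℓ + 1))) :=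
        Nat.mul_le_mul_left _ arith
    _ = (d * ee n d (ℓ + 1) + 4 * (ℓ + 1) * ee n d ℓ) * ((d + ℓ + 1) * (P + ℓ + 1)) := by
        rw [mul_add, mul_left_comm, ← key]; ring

lemma ee_zero_pos (hd : d ≤ n / 2) : 0 < ee n d 0 := by
  rw [ee]
  exact Nat.mul_pos (Nat.choose_pos (by omega)) (Nat.choose_pos (by omega))

lemma mul_ee_zero_le (hd : 2 * d ≤ n / 2) (h : ℓ ≤ d) :
    d * ee n d 0 ≤ d * ee n d ℓ + 4 * ℓ ^ 2 * ee n d 0 := by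
  induction ℓ with
  | zero => simp
  | succ ℓ ih =>
    have step := mul_ee_le_mul_ee_succ_add hd h
    have hmono := ee_le_ee_zero (by omega : d ≤ n / 2) (by omega : ℓ ≤ d)
    nlinarith [ih (by omega)]

lemma ee_zero_le_two_mul (hd : 2 * d ≤ n / 2) (h : 8 * ℓ ^ 2 ≤ d) :
    ee n d 0 ≤ 2 * ee n d ℓ := by
  rcases Nat.eq_zero_or_pos ℓ with rfl | hℓ
  · omega
  have key := mul_ee_zero_le hd (by nlinarith : ℓ ≤ d)
  refine le_of_mul_le_mul_left (a := d) ?_ (by nlinarith)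
  nlinarith

lemma choose_eq_ee_zero_add_sum (hn : Even n) :
    n.choose (2 * d) = ee n d 0 + 2 * ∑ ℓ ∈ Icc 1 d, ee n d ℓ := by
  obtain ⟨m, rfl⟩ := hn
  have hm : (m + m) / 2 = m := by omega
  set g : ℕ → ℕ := fun i => m.choose i * m.choose (2 * d - i) with hg
  have hlow : ∀ i < d, g (d - 1 - i) = ee (m + m) d (i + 1) := by
    intro i hi
    simp only [hg, ee, hm]
    congr 2 <;> omega
  have hhigh : ∀ i < d, g (d + (i + 1)) = ee (m + m) d (i + 1) := by
    intro i hi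
    simp only [hg, ee, hm]
    rw [mul_comm]; congr 2; omega
  rw [Nat.add_choose_eq, Finset.Nat.sum_antidiagonal_eq_sum_range_succ_mk]
  change ∑ i ∈ range (2 * d + 1), g i = _
  rw [show 2 * d + 1 = d + (d + 1) by ring, sum_range_add, ← sum_range_reflect, sum_range_succ',
    sum_Icc_one_eq_sum_range, sum_congr rfl fun i hi => hlow i (mem_range.mp hi),
    sum_congr rfl fun i hi => hhigh i (mem_range.mp hi)]
  simp [hg, ee, hm, two_mul]
  ring

lemma mul_ee_zero_le_choose {N : ℕ} (hn : Even n) (hd : 2 * d ≤ n / 2) (hN : 8 * N ^ 2 ≤ d) :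
    N * ee n d 0 ≤ n.choose (2 * d) := by
  have hNd : N ≤ d := by nlinarith
  calc N * ee n d 0 = ∑ _ℓ ∈ Icc 1 N, ee n d 0 := by simp
    _ ≤ ∑ ℓ ∈ Icc 1 N, 2 * ee n d ℓ := by
        refine sum_le_sum fun ℓ hℓ => ee_zero_le_two_mul hd ?_
        have := (mem_Icc.mp hℓ).2
        nlinarith
    _ ≤ ∑ ℓ ∈ Icc 1 d, 2 * ee n d ℓ := sum_le_sum_of_subset (Icc_subset_Icc_right hNd)
    _ ≤ n.choose (2 * d) := by rw [choose_eq_ee_zero_add_sum hn, ← mul_sum]; omega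

variable {c : ℕ}

lemma es_le_mul_ee (hc : n / 2 ≤ c * (d + 1) + d) : es n d ℓ ≤ c * ee n d ℓ := by
  have hfactor : n / 2 - (d + ℓ) ≤ c * (d + ℓ + 1) := by
    have := Nat.mul_le_mul_left c (by omega : d + 1 ≤ d + ℓ + 1)
    omega
  refine le_of_mul_le_mul_right (a := d + ℓ + 1) ?_ (by omega)
  calc es n d ℓ * (d + ℓ + 1) = ee n d ℓ * (n / 2 - (d + ℓ)) := es_mul_add_one
    _ ≤ ee n d ℓ * (c * (d + ℓ + 1)) := Nat.mul_le_mul_left _ hfactor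
    _ = c * ee n d ℓ * (d + ℓ + 1) := by ring

lemma mul_ee_succ_le_es (hc : c * d + d ≤ n / 2) (h : ℓ < d) :
    c * ee n d (ℓ + 1) ≤ es n d ℓ := by
  have hfactor : c * (d - ℓ) ≤ n / 2 - (d - (ℓ + 1)) := by
    have := Nat.mul_le_mul_left c (by omega : d - ℓ ≤ d)
    omega
  refine le_of_mul_le_mul_right (a := d - ℓ) ?_ (by omega)
  calc c * ee n d (ℓ + 1) * (d - ℓ) = ee n d (ℓ + 1) * (c * (d - ℓ)) := by ring
    _ ≤ ee n d (ℓ + 1) * (n / 2 - (d - (ℓ + 1))) := Nat.mul_le_mul_left _ hfactor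
    _ = es n d ℓ * (d - ℓ) := (es_mul_sub h).symm

end Binomial

section Threshold

variable {n d c : ℕ}

lemma aF_natCast (x : ℕ) :
    aF n d x = ee n d 0 + 2 * ∑ ℓ ∈ Icc 1 x, (ee n d ℓ : ℤ) := by
  simp [aF]

lemma bF_natCast (x : ℕ) : bF n d x = 2 * ∑ ℓ ∈ Icc (x + 1) d, (es n d ℓ : ℤ) := by
  simp [bF]

lemma aF_natCast_add_one (x : ℕ) : aF n d (x + 1) = aF n d x + 2 * ee n d (x + 1) := by
  rw [← Nat.cast_add_one, aF_natCast, aF_natCast, sum_Icc_succ_top (by omega)]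
  ring

lemma aF_add_two_mul_sum (hn : Even n) {x : ℕ} (hx : x ≤ d) :
    aF n d x + 2 * ∑ ℓ ∈ Icc (x + 1) d, (ee n d ℓ : ℤ) = n.choose (2 * d) := by
  have hsplit := sum_Ioc_consecutive (fun ℓ => (ee n d ℓ : ℤ)) (Nat.zero_le x) hx
  simp only [← Icc_add_one_left_eq_Ioc, zero_add] at hsplit
  rw [choose_eq_ee_zero_add_sum hn, aF_natCast]
  push_cast
  linear_combination 2 * hsplit

lemma aF_natCast_self (hn : Even n) : aF n d d = n.choose (2 * d) := by
  have h := aF_add_two_mul_sum hn le_rfl (n := n) (x := d)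
  rwa [Icc_eq_empty (by omega), sum_empty, mul_zero, add_zero] at h

lemma bF_le_mul (hn : Even n) (hc : n / 2 ≤ c * (d + 1) + d) {x : ℕ} (hx : x ≤ d) :
    bF n d x ≤ c * (n.choose (2 * d) - aF n d x) := by
  calc bF n d x = 2 * ∑ ℓ ∈ Icc (x + 1) d, (es n d ℓ : ℤ) := bF_natCast x
    _ ≤ 2 * ∑ ℓ ∈ Icc (x + 1) d, (c * ee n d ℓ : ℤ) := by
        gcongr with ℓ
        exact_mod_cast es_le_mul_ee hc
    _ = c * (n.choose (2 * d) - aF n d x) := by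
        rw [← aF_add_two_mul_sum hn hx, ← mul_sum]
        ring

lemma mul_le_bF (hn : Even n) (hc : c * d + d ≤ n / 2) {x : ℕ} (hx : x < d) :
    c * (n.choose (2 * d) - aF n d (x + 1)) ≤ bF n d x := by
  calc c * (n.choose (2 * d) - aF n d (x + 1))
      = 2 * ∑ ℓ ∈ Ico (x + 1) d, (c * ee n d (ℓ + 1) : ℤ) := by
        rw [← Nat.cast_add_one, ← aF_add_two_mul_sum hn hx,
          sum_Ico_add' (fun ℓ => (c * ee n d ℓ : ℤ)), Ico_add_one_right_eq_Icc, ← mul_sum]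
        ring
    _ ≤ 2 * ∑ ℓ ∈ Ico (x + 1) d, (es n d ℓ : ℤ) := by
        gcongr with ℓ hℓ
        exact_mod_cast mul_ee_succ_le_es hc (mem_Ico.mp hℓ).2
    _ ≤ 2 * ∑ ℓ ∈ Icc (x + 1) d, (es n d ℓ : ℤ) := by
        gcongr
        exact Ico_subset_Icc_self
    _ = bF n d x := (bF_natCast x).symm

lemma aF_neg_one : aF n d (-1) = 0 := by simp [aF]

lemma two_mul_aF_le_choose (hn : Even n) (hc : n / 2 ≤ c * (d + 1) + d) (hc0 : 0 < c) {u : ℤ}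
    (hu : -1 ≤ u) (hud : u ≤ d) (h : c * aF n d u ≤ bF n d u) :
    2 * aF n d u ≤ n.choose (2 * d) := by
  rcases (by omega : u = -1 ∨ 0 ≤ u) with rfl | hu0
  · simp [aF_neg_one]
  lift u to ℕ using hu0
  have hmul : (c : ℤ) * aF n d u ≤ c * (n.choose (2 * d) - aF n d u) :=
    h.trans (bF_le_mul hn hc (by omega))
  linarith [le_of_mul_le_mul_left hmul (by positivity)]

lemma choose_le_two_mul_aF_add (hn : Even n) (hc : c * d + d ≤ n / 2) {x : ℕ} (hx : x ≤ d)
    (h : bF n d x < c * aF n d x) : n.choose (2 * d) ≤ 2 * aF n d x + 2 * ee n d 0 := by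
  rcases hx.lt_or_eq with hx | rfl
  · have hlt := lt_of_mul_lt_mul_left ((mul_le_bF hn hc hx).trans_lt h) (by positivity)
    have hmono := ee_le_ee_zero (n := n) (by omega) hx
    have hmono' : (ee n d (x + 1) : ℤ) ≤ ee n d 0 := by exact_mod_cast hmono
    rw [aF_natCast_add_one] at hlt
    linarith
  · rw [aF_natCast_self hn]
    linarith [(by positivity : (0 : ℤ) ≤ ee n x 0), (by positivity : (0 : ℤ) ≤ n.choose (2 * x))]

lemma aF_le_aF_sub_one_add (hd : d ≤ n / 2) {x : ℕ} (hx : x ≤ d) :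
    aF n d x ≤ aF n d (x - 1) + 2 * ee n d 0 := by
  cases x with
  | zero =>
    rw [aF_natCast, Nat.cast_zero, zero_sub, aF_neg_one, Icc_eq_empty (by omega), sum_empty]
    linarith [(by positivity : (0 : ℤ) ≤ ee n d 0)]
  | succ x =>
    have hmono : (ee n d (x + 1) : ℤ) ≤ ee n d 0 := by exact_mod_cast ee_le_ee_zero hd hx
    push_cast
    rw [add_sub_cancel_right, aF_natCast_add_one]
    linarith

lemma choose_le_two_mul_aF_add_of_isGreatest (hn : Even n) (hc : c * d + d ≤ n / 2) (hc0 : 0 < c)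
    {u : ℤ} (hu : IsGreatest {x : ℤ | -1 ≤ x ∧ x ≤ (d : ℤ) - 1 ∧ c * aF n d x ≤ bF n d x} u) :
    n.choose (2 * d) ≤ 2 * aF n d u + 6 * ee n d 0 := by
  obtain ⟨⟨hu, hud, -⟩, hmax⟩ := hu
  obtain ⟨x, hx⟩ : ∃ x : ℕ, (x : ℤ) = u + 1 := ⟨(u + 1).toNat, by omega⟩
  have hxd : x ≤ d := by omega
  have hfail : bF n d x < c * aF n d x := by
    rcases hxd.lt_or_eq with hlt | rfl
    · by_contra! hle
      have := hmax ⟨by omega, by omega, hle⟩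
      omega
    · rw [bF_natCast, Icc_eq_empty (by omega), sum_empty, mul_zero, aF_natCast_self hn]
      have : 0 < n.choose (2 * x) := Nat.choose_pos (by omega)
      positivity
  have hstep := aF_le_aF_sub_one_add (n := n) (by omega) hxd
  rw [show (x : ℤ) - 1 = u by omega] at hstep
  linarith [choose_le_two_mul_aF_add hn hc hxd hfail]

end Threshold

lemma MMS_eq_choose_div_two {k : ℕ} (hk : 2 ≤ k) (d : ℕ) :
    MMS ((2 * d + 1) * k - 1) k = ((2 * d + 1) * k - 1).choose (2 * d) / 2 := by
  have hn : (2 * d + 1) * k - 1 = (k - 1) + k * (2 * d) := by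
    obtain ⟨j, rfl⟩ : ∃ j, k = j + 1 := ⟨k - 1, by omega⟩
    rw [Nat.add_sub_cancel]
    ring_nf
    omega
  have hdiv : ((2 * d + 1) * k - 1) / k = 2 * d := by
    rw [hn, Nat.add_mul_div_left _ _ (by omega), Nat.div_eq_of_lt (by omega), zero_add]
  have hmod : ((2 * d + 1) * k - 1) % k = k - 1 := by
    rw [hn, Nat.add_mul_mod_self_left, Nat.mod_eq_of_lt (by omega)]
  have hden : (k : ℝ) - (k - 1 : ℕ) + (k - 1 : ℕ) * ((2 * d : ℕ) + 1) /
      (((2 * d + 1) * k - 1 : ℕ) - (2 * d : ℕ)) = 2 := by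
    have hk' : (1 : ℝ) < k := by exact_mod_cast hk
    rw [Nat.cast_sub (by omega), Nat.cast_sub (by nlinarith)]
    push_cast
    rw [show ((2 * d + 1) * k - 1 - 2 * d : ℝ) = (k - 1) * (2 * d + 1) by ring,
      div_self (by positivity)]
    ring
  rw [MMS, hdiv, hmod, hden]

lemma one_sub_mul_half_le_and_le_one_add_mul_half {ε N C e a Q : ℝ} (hε : 0 < ε)
    (hN : 8 ≤ ε * N) (he : 1 ≤ e) (hNe : N * e ≤ C) (hupper : 2 * a ≤ C)
    (hlower : C ≤ 2 * a + 6 * e) (hQa : a - 1 ≤ Q) (hQ : Q ≤ a) :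
    (1 - ε) * (C / 2) ≤ Q ∧ Q ≤ (1 + ε) * (C / 2) := by
  have hC : 0 ≤ C := by nlinarith
  constructor
  · linarith [mul_le_mul_of_nonneg_left hNe hε.le,
      mul_le_mul_of_nonneg_right hN (by linarith : 0 ≤ e)]
  · linarith [mul_nonneg hε.le hC]

/-- Lemma 15(d): `Q ∼ MMS(n,k)` as `n = (2d+1)k - 1 → ∞` with `k = o(n)` and `k ≥ 3`
odd, where `Q = a(u)` if `a(u)` is even and `Q = a(u) - 1` otherwise. -/
theorem Q_asymptotic_k_sub_one (ε : ℝ) (hε : 0 < ε) :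
    ∃ D : ℕ, ∀ k d : ℕ, Odd k → 3 ≤ k → D ≤ d → ∀ u Q : ℤ,
      IsGreatest {x : ℤ | -1 ≤ x ∧ x ≤ (d : ℤ) - 1 ∧
        ((k : ℤ) - 1) * aF ((2 * d + 1) * k - 1) d x ≤ bF ((2 * d + 1) * k - 1) d x} u →
      ((Even (aF ((2 * d + 1) * k - 1) d u) ∧ Q = aF ((2 * d + 1) * k - 1) d u) ∨
        (¬ Even (aF ((2 * d + 1) * k - 1) d u) ∧ Q = aF ((2 * d + 1) * k - 1) d u - 1)) →
      (1 - ε) * MMS ((2 * d + 1) * k - 1) k ≤ (Q : ℝ) ∧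
        (Q : ℝ) ≤ (1 + ε) * MMS ((2 * d + 1) * k - 1) k := by
  obtain ⟨N, hN⟩ := exists_nat_ge (8 / ε)
  refine ⟨8 * N ^ 2, fun k d hk hk3 hd u Q hu hQ => ?_⟩
  obtain ⟨K, rfl⟩ := hk
  rw [MMS_eq_choose_div_two (by omega)]
  set n := (2 * d + 1) * (2 * K + 1) - 1
  have hn2 : n = 2 * ((2 * d + 1) * K + d) := by
    have : (2 * d + 1) * (2 * K + 1) = 2 * ((2 * d + 1) * K + d) + 1 := by ring
    omega
  have hhalf : n / 2 = (2 * d + 1) * K + d := by omega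
  have hn : Even n := ⟨(2 * d + 1) * K + d, by omega⟩
  have hlow : 2 * K * d + d ≤ n / 2 := by rw [hhalf]; nlinarith
  have hupp : n / 2 ≤ 2 * K * (d + 1) + d := by rw [hhalf]; nlinarith
  have hc : ((2 * K + 1 : ℕ) : ℤ) - 1 = ((2 * K : ℕ) : ℤ) := by push_cast; ring
  rw [hc] at hu
  have hupper := two_mul_aF_le_choose hn hupp (by omega) hu.1.1 (by linarith [hu.1.2.1]) hu.1.2.2
  have hlower := choose_le_two_mul_aF_add_of_isGreatest hn hlow (by omega) hu
  have hcentral := mul_ee_zero_le_choose hn (by nlinarith) hd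
  have he0 := ee_zero_pos (n := n) (d := d) (by rw [hhalf]; exact Nat.le_add_left _ _)
  have hQ' : aF n d u - 1 ≤ Q ∧ Q ≤ aF n d u := by omega
  exact one_sub_mul_half_le_and_le_one_add_mul_half (e := ee n d 0) (a := aF n d u) hε
    (by rwa [div_le_iff₀ hε, mul_comm] at hN) (by exact_mod_cast he0) (by exact_mod_cast hcentral)
    (by exact_mod_cast hupper) (by exact_mod_cast hlower) (by exact_mod_cast hQ'.1)
    (by exact_mod_cast hQ'.2)
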